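/- Let X_l = U_l Σ_l V_l^* and X = U Σ V^* be two m×n matrices of rank r, given by their reduced singular value decompositions (so U_l, U ∈ ℝ^{m×r} and V_l, V ∈ ℝ^{n×r} have orthonormal columns and Σ_l, Σ are r×r diagonal with positive diagonal entries). Then ‖U_l U_l^* − U U^*‖_F ≤ √2 ‖X_l − X‖_F / σ_min(X) and ‖V_l V_l^* − V V^*‖_F ≤ √2 ‖X_l − X‖_F / σ_min(X). -/
import Mathlib


open Matrix BigOperators

/-- Frobenius inner product of two real matrices. -/
noncomputable def frobInner {m n : ℕ} (A B : Matrix (Fin m) (Fin n) ℝ) : ℝ :=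
  ∑ i, ∑ j, A i j * B i j

/-- Frobenius norm of a real matrix. -/
noncomputable def frobNorm {m n : ℕ} (A : Matrix (Fin m) (Fin n) ℝ) : ℝ :=
  Real.sqrt (∑ i, ∑ j, (A i j) ^ 2)

/-- Euclidean inner product on `ℝ^p`. -/
noncomputable def euclInner {p : ℕ} (x y : Fin p → ℝ) : ℝ := ∑ i, x i * y i

/-- Euclidean norm on `ℝ^p`. -/
noncomputable def euclNorm {p : ℕ} (x : Fin p → ℝ) : ℝ := Real.sqrt (∑ i, (x i) ^ 2)

/-- `R` is the restricted isometry constant of order `s` of the linear map `A`: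
the smallest number `t` such that `(1-t)‖Z‖_F² ≤ ‖A Z‖₂² ≤ (1+t)‖Z‖_F²`
for all matrices `Z` of rank at most `s`. -/
def IsRIC {m n p : ℕ} (A : Matrix (Fin m) (Fin n) ℝ →ₗ[ℝ] (Fin p → ℝ)) (s : ℕ) (R : ℝ) :
    Prop :=
  IsLeast {t : ℝ | ∀ Z : Matrix (Fin m) (Fin n) ℝ, Z.rank ≤ s →
    (1 - t) * (frobNorm Z) ^ 2 ≤ (euclNorm (A Z)) ^ 2 ∧
      (euclNorm (A Z)) ^ 2 ≤ (1 + t) * (frobNorm Z) ^ 2} R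

/-- Orthogonal projection onto the tangent space of the rank-`r` manifold at
`U * Σ * Vᵀ`: `P(Z) = U Uᵀ Z + Z V Vᵀ − U Uᵀ Z V Vᵀ`. -/
noncomputable def tangentProj {m n r : ℕ} (U : Matrix (Fin m) (Fin r) ℝ)
    (V : Matrix (Fin n) (Fin r) ℝ) (Z : Matrix (Fin m) (Fin n) ℝ) :
    Matrix (Fin m) (Fin n) ℝ :=
  U * Uᵀ * Z + Z * (V * Vᵀ) - U * Uᵀ * Z * (V * Vᵀ)

/-- Spectral (operator) norm of a real matrix. -/
noncomputable def specNorm {m n : ℕ} (A : Matrix (Fin m) (Fin n) ℝ) : ℝ :=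
  sSup {c : ℝ | ∃ x : Fin n → ℝ, euclNorm x ≤ 1 ∧ c = euclNorm (A.mulVec x)}

noncomputable def trF {m n : ℕ} (A : Matrix (Fin m) (Fin n) ℝ) : ℝ :=
  Matrix.trace (Aᵀ * A)

lemma trF_eq_sum {m n : ℕ} (A : Matrix (Fin m) (Fin n) ℝ) :
    trF A = ∑ i, ∑ j, (A i j) ^ 2 := by
  simp only [trF, Matrix.trace, Matrix.diag, Matrix.mul_apply, Matrix.transpose_apply, sq]
  exact Finset.sum_comm

lemma trF_nonneg {m n : ℕ} (A : Matrix (Fin m) (Fin n) ℝ) : 0 ≤ trF A := by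
  rw [trF_eq_sum]; positivity

lemma frobNorm_eq {m n : ℕ} (A : Matrix (Fin m) (Fin n) ℝ) :
    frobNorm A = Real.sqrt (trF A) := by rw [trF_eq_sum, frobNorm]

lemma frobNorm_nonneg {m n : ℕ} (A : Matrix (Fin m) (Fin n) ℝ) : 0 ≤ frobNorm A := by
  rw [frobNorm]; exact Real.sqrt_nonneg _

lemma frobNorm_sq {m n : ℕ} (A : Matrix (Fin m) (Fin n) ℝ) :
    frobNorm A ^ 2 = trF A := by
  rw [frobNorm_eq]; exact Real.sq_sqrt (trF_nonneg A)

lemma trF_transpose {m n : ℕ} (A : Matrix (Fin m) (Fin n) ℝ) : trF Aᵀ = trF A := by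
  rw [trF_eq_sum, trF_eq_sum]
  simp only [Matrix.transpose_apply]
  exact Finset.sum_comm

lemma frobNorm_transpose {m n : ℕ} (A : Matrix (Fin m) (Fin n) ℝ) :
    frobNorm Aᵀ = frobNorm A := by rw [frobNorm_eq, frobNorm_eq, trF_transpose]

lemma aux_bound {m n r : ℕ} (hr : 0 < r)
    (Ul U : Matrix (Fin m) (Fin r) ℝ) (V : Matrix (Fin n) (Fin r) ℝ)
    (S : Matrix (Fin r) (Fin r) ℝ) (Xl : Matrix (Fin m) (Fin n) ℝ)
    (hUl : Ulᵀ * Ul = 1) (hU : Uᵀ * U = 1) (hV : Vᵀ * V = 1)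
    (hSd : S.IsDiag) (hSpos : ∀ i, 0 < S i i)
    (hPXl : Ul * Ulᵀ * Xl = Xl) :
    frobNorm (Ul * Ulᵀ - U * Uᵀ) ≤
      Real.sqrt 2 * frobNorm (Xl - U * S * Vᵀ) / (⨅ i, S i i) := by
  haveI : Nonempty (Fin r) := ⟨⟨0, hr⟩⟩
  set σ : ℝ := ⨅ i, S i i with hσ
  obtain ⟨i0, hi0⟩ := exists_eq_ciInf_of_finite (f := fun i => S i i)
  have hσpos : 0 < σ := by rw [hσ, ← hi0]; exact hSpos i0
  have hσle : ∀ i, σ ≤ S i i := fun i =>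
    ciInf_le (Set.Finite.bddBelow (Set.finite_range _)) i
  set Pl : Matrix (Fin m) (Fin m) ℝ := Ul * Ulᵀ with hPldef
  set P : Matrix (Fin m) (Fin m) ℝ := U * Uᵀ with hPdef
  set M : Matrix (Fin m) (Fin r) ℝ := U - Pl * U with hMdef
  set D : Matrix (Fin m) (Fin n) ℝ := Xl - U * S * Vᵀ with hDdef
  clear_value σ Pl P M D
  have hPlT : Plᵀ = Pl := by rw [hPldef, Matrix.transpose_mul, Matrix.transpose_transpose]
  have hPT : Pᵀ = P := by rw [hPdef, Matrix.transpose_mul, Matrix.transpose_transpose]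
  have hPl2 : Pl * Pl = Pl := by
    rw [hPldef, Matrix.mul_assoc, ← Matrix.mul_assoc Ulᵀ Ul Ulᵀ, hUl, Matrix.one_mul]
  -- traces
  have htrPl : Matrix.trace Pl = (r : ℝ) := by
    rw [hPldef, Matrix.trace_mul_comm, hUl]; simp
  have hcross : Matrix.trace (P * Pl) = Matrix.trace (Uᵀ * Pl * U) := by
    rw [hPdef, Matrix.mul_assoc, Matrix.trace_mul_comm]
  -- step a
  have ha : trF (Pl - P) = 2 * trF M := by
    have h1 : (Pl - P)ᵀ * (Pl - P) = Pl * Pl - Pl * P - P * Pl + P * P := by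
      rw [Matrix.transpose_sub, hPlT, hPT]; noncomm_ring
    have h2 : Mᵀ * M = 1 - (Uᵀ * (Pl * U)) := by
      rw [hMdef, Matrix.transpose_sub, Matrix.transpose_mul, hPlT,
        Matrix.sub_mul, Matrix.mul_sub, Matrix.mul_sub, hU]
      have e : Uᵀ * Pl * (Pl * U) = Uᵀ * (Pl * U) := by
        rw [Matrix.mul_assoc, ← Matrix.mul_assoc Pl Pl U, hPl2]
      have e' : Uᵀ * Pl * U = Uᵀ * (Pl * U) := by rw [Matrix.mul_assoc]
      rw [e, e']
      abel
    have e1 : trF (Pl - P) =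
        Matrix.trace Pl - 2 * Matrix.trace (P * Pl) + Matrix.trace (P * P) := by
      rw [trF, h1, hPl2]
      rw [Matrix.trace_add, Matrix.trace_sub, Matrix.trace_sub]
      rw [Matrix.trace_mul_comm Pl P]
      ring
    have hP2 : P * P = P := by
      rw [hPdef, Matrix.mul_assoc, ← Matrix.mul_assoc Uᵀ U Uᵀ, hU, Matrix.one_mul]
    have e2 : Matrix.trace (P * P) = (r : ℝ) := by
      rw [hP2, hPdef, Matrix.trace_mul_comm, hU]; simp
    have e3 : trF M = (r : ℝ) - Matrix.trace (Uᵀ * (Pl * U)) := by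
      rw [trF, h2, Matrix.trace_sub, Matrix.trace_one]; simp
    rw [e1, e2, e3, htrPl, hcross, Matrix.mul_assoc]; ring
  -- step b
  have hMS : ∀ i j, (M * S) i j = M i j * S j j := by
    intro i j
    rw [Matrix.mul_apply]
    exact Finset.sum_eq_single j (fun k _ hk => by rw [hSd hk, mul_zero]) (by simp)
  have hb : σ ^ 2 * trF M ≤ trF (M * S) := by
    rw [trF_eq_sum, trF_eq_sum, Finset.mul_sum]
    refine Finset.sum_le_sum fun i _ => ?_
    rw [Finset.mul_sum]
    refine Finset.sum_le_sum fun j _ => ?_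
    rw [hMS, mul_pow]
    have h5 : σ ^ 2 ≤ S j j ^ 2 := pow_le_pow_left₀ hσpos.le (hσle j) 2
    nlinarith [sq_nonneg (M i j)]
  -- step c
  have hc : trF (M * S * Vᵀ) = trF (M * S) := by
    rw [trF, trF]
    have e : (M * S * Vᵀ)ᵀ * (M * S * Vᵀ) = V * ((M * S)ᵀ * (M * S) * Vᵀ) := by
      simp only [Matrix.transpose_mul, Matrix.transpose_transpose, Matrix.mul_assoc]
    rw [e, Matrix.trace_mul_comm, Matrix.mul_assoc, hV, Matrix.mul_one]
  -- step d
  have hd : M * S * Vᵀ = Pl * D - D := by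
    rw [hMdef, hDdef, Matrix.sub_mul, Matrix.sub_mul, Matrix.mul_sub, hPXl]
    simp only [Matrix.mul_assoc]
    abel
  -- step e
  have he : trF (Pl * D - D) ≤ trF D := by
    have h1 : (Pl * D - D)ᵀ * (Pl * D - D) = Dᵀ * D - Dᵀ * (Pl * D) := by
      rw [Matrix.transpose_sub, Matrix.transpose_mul, hPlT,
        Matrix.sub_mul, Matrix.mul_sub, Matrix.mul_sub]
      have e : Dᵀ * Pl * (Pl * D) = Dᵀ * (Pl * D) := by
        rw [Matrix.mul_assoc, ← Matrix.mul_assoc Pl Pl D, hPl2]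
      have e' : Dᵀ * Pl * D = Dᵀ * (Pl * D) := by rw [Matrix.mul_assoc]
      rw [e, e']
      abel
    have h2 : Dᵀ * (Pl * D) = (Ulᵀ * D)ᵀ * (Ulᵀ * D) := by
      simp only [Matrix.transpose_mul, Matrix.transpose_transpose, hPldef, Matrix.mul_assoc]
    have h3 : trF (Pl * D - D) = trF D - trF (Ulᵀ * D) := by
      rw [trF, trF, trF, h1, h2, Matrix.trace_sub]
    have := trF_nonneg (Ulᵀ * D)
    linarith
  -- combine
  have chain : σ ^ 2 * trF (Pl - P) ≤ 2 * trF D := by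
    have e : σ ^ 2 * trF (Pl - P) = 2 * (σ ^ 2 * trF M) := by rw [ha]; ring
    rw [e]
    have := hd ▸ hc
    linarith
  have hfrob2 : frobNorm (Pl - P) ^ 2 ≤ (Real.sqrt 2 * frobNorm D / σ) ^ 2 := by
    rw [frobNorm_sq]
    have hrhs : (Real.sqrt 2 * frobNorm D / σ) ^ 2 = 2 * trF D / σ ^ 2 := by
      rw [div_pow, mul_pow, Real.sq_sqrt (by norm_num : (0:ℝ) ≤ 2), frobNorm_sq]
    rw [hrhs, le_div_iff₀ (by positivity)]
    linarith
  have h2 : 0 ≤ Real.sqrt 2 * frobNorm D / σ := by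
    have := frobNorm_nonneg D
    positivity
  exact le_of_pow_le_pow_left₀ two_ne_zero h2 hfrob2

/-- Lemma 2, Frobenius-norm part: for rank-`r` matrices `X_l = U_l Σ_l V_lᵀ` and
`X = U Σ Vᵀ`, `‖U_l U_lᵀ − U Uᵀ‖_F ≤ √2 ‖X_l − X‖_F / σ_min(X)` and
`‖V_l V_lᵀ − V Vᵀ‖_F ≤ √2 ‖X_l − X‖_F / σ_min(X)`. -/
theorem singular_subspace_frobenius_bound {m n r : ℕ}
    (hr : 0 < r)
    (Xl X : Matrix (Fin m) (Fin n) ℝ)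
    (hrankXl : Xl.rank = r) (hrankX : X.rank = r)
    (Ul U : Matrix (Fin m) (Fin r) ℝ) (Vl V : Matrix (Fin n) (Fin r) ℝ)
    (Sl S : Matrix (Fin r) (Fin r) ℝ)
    (hUl : Ulᵀ * Ul = 1) (hVl : Vlᵀ * Vl = 1)
    (hU : Uᵀ * U = 1) (hV : Vᵀ * V = 1)
    (hSl : Sl.IsDiag ∧ ∀ i, 0 < Sl i i) (hS : S.IsDiag ∧ ∀ i, 0 < S i i)
    (hXlsvd : Xl = Ul * Sl * Vlᵀ) (hXsvd : X = U * S * Vᵀ) :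
    frobNorm (Ul * Ulᵀ - U * Uᵀ) ≤ Real.sqrt 2 * frobNorm (Xl - X) / (⨅ i, S i i) ∧
      frobNorm (Vl * Vlᵀ - V * Vᵀ) ≤ Real.sqrt 2 * frobNorm (Xl - X) / (⨅ i, S i i) := by
  have hST : Sᵀ = S := by
    ext i j
    by_cases h : i = j
    · subst h; rfl
    · simp only [Matrix.transpose_apply, hS.1 h, hS.1 (Ne.symm h)]
  have hPXl : Ul * Ulᵀ * Xl = Xl := by
    rw [hXlsvd, ← Matrix.mul_assoc, ← Matrix.mul_assoc,
      Matrix.mul_assoc Ul Ulᵀ Ul, hUl, Matrix.mul_one]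
  have h1 := aux_bound hr Ul U V S Xl hUl hU hV hS.1 hS.2 hPXl
  have hPXlT : Vl * Vlᵀ * Xlᵀ = Xlᵀ := by
    rw [hXlsvd]
    simp only [Matrix.transpose_mul, Matrix.transpose_transpose]
    rw [← Matrix.mul_assoc, ← Matrix.mul_assoc,
      Matrix.mul_assoc Vl Vlᵀ Vl, hVl, Matrix.mul_one, Matrix.mul_assoc]
  have h2 := aux_bound hr Vl V U S Xlᵀ hVl hV hU hS.1 hS.2 hPXlT
  have hXT : Xlᵀ - V * S * Uᵀ = (Xl - U * S * Vᵀ)ᵀ := by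
    rw [Matrix.transpose_sub]
    congr 1
    simp only [Matrix.transpose_mul, Matrix.transpose_transpose, hST, Matrix.mul_assoc]
  rw [hXT, frobNorm_transpose] at h2
  rw [hXsvd]
  exact ⟨h1, h2⟩
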